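/- Let P: ℂ^{1×N} → ℂ be a homogeneous polynomial function of degree p on row vectors (i.e. P(w) = Σ_{|I|=p} c_I w_1^{i_1}⋯w_N^{i_N}). Then for every v ∈ ℂ^N, every Hermitian N×N matrix h, and all Hermitian matrices H_0, …, H_{N−1}: Σ_{j=0}^{N−1} (−1)^j · (d/dt at t = 0 of P(v*(h+tH_j))) · pbar(v,h)(H_0, …, H_{j−1}, H_{j+1}, …, H_{N−1}) = (p/N) · P(v*h) · dpbar(v)(H_0, …, H_{N−1}). (This is the identity dP(v*h) ∧ p̄(v) = p N^{−1} P(v*h) dp̄(v).) -/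

import Mathlib

open Matrix BigOperators

noncomputable section

/-- The `i`-th entry of the row vector `v* h`, where `v*` is the conjugate transpose of the
column vector `v`. -/
def vstarM {N : ℕ} (v : Fin N → ℂ) (h : Matrix (Fin N) (Fin N) ℂ) (i : Fin N) : ℂ :=
  ∑ j, (starRingEnd ℂ) (v j) * h j i

/-- The scalar `v* h v`. -/
def vhv {N : ℕ} (v : Fin N → ℂ) (h : Matrix (Fin N) (Fin N) ℂ) : ℂ :=
  ∑ i, vstarM v h i * v i

/-- `pbar(v,h)(H_1,…,H_{N−1})` : the value of the `(N-1)`-form `p̄(v)` at the point `h` on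
the tangent vectors `H_1,…,H_{N-1}`.  Here `N = n+2`; the matrix `M⁽ⁱ⁾` has `(k,l)`-entry
`(v*H_l)_{r_k}` where `r` is the decreasing enumeration of `{0,…,N-1}` omitting `i`
(`r k = Fin.rev ((Fin.rev i).succAbove k)`), and the sign `(−1)^{i−1}` (1-based) is
`(−1)^{i}` in 0-based indexing. -/
def pbar {n : ℕ} (v : Fin (n + 2) → ℂ) (h : Matrix (Fin (n + 2)) (Fin (n + 2)) ℂ)
    (H : Fin (n + 1) → Matrix (Fin (n + 2)) (Fin (n + 2)) ℂ) : ℂ :=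
  2 * (-1 : ℂ) ^ ((n + 2) * (n + 1) / 2) *
    ∑ i : Fin (n + 2), (-1 : ℂ) ^ (i : ℕ) * vstarM v h i *
      Matrix.det (Matrix.of fun k l : Fin (n + 1) =>
        vstarM v (H l) (Fin.rev ((Fin.rev i).succAbove k)))

/-- `dpbar(v)(H_1,…,H_N) = 2N(−1)^{(N+2)(N−1)/2} det M` where `M` has `(k,l)`-entry
`(v*H_l)_{N+1−k}` (1-based), i.e. `(v*H_l)_{Fin.rev k}` in 0-based indexing. -/
def dpbar {n : ℕ} (v : Fin (n + 2) → ℂ)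
    (H : Fin (n + 2) → Matrix (Fin (n + 2)) (Fin (n + 2)) ℂ) : ℂ :=
  2 * (n + 2) * (-1 : ℂ) ^ ((n + 4) * (n + 1) / 2) *
    Matrix.det (Matrix.of fun k l : Fin (n + 2) => vstarM v (H l) (Fin.rev k))

/-
Let `B` be the matrix whose columns are the row vectors `v* H_l` with their entries reversed,
`a = v* h` and `e = ∇P(a)`. By the chain rule the derivative of `P(v* (h + t H_j))` is
`(e B)_j` (up to reversing `e`), and every minor occurring in `pbar v h (H_0,…,Ĥ_j,…)` is a
cofactor of `B`, so that `(-1)^j pbar` is, up to a constant sign, the `j`-th entry of `adj B · a`.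
The left-hand side is therefore a constant times `(e B) · (adj B a) = det B · (e · a)`, and
Euler's identity `e · a = p P(a)` finishes the proof.
-/

open MvPolynomial

theorem Matrix.vecMul_dotProduct_adjugate_mulVec {n R : Type*} [Fintype n] [DecidableEq n]
    [CommRing R] (A : Matrix n n R) (x y : n → R) :
    (x ᵥ* A) ⬝ᵥ (adjugate A *ᵥ y) = A.det * (x ⬝ᵥ y) := by
  rw [← dotProduct_mulVec, mulVec_mulVec, mul_adjugate, smul_mulVec, one_mulVec,
    dotProduct_smul, smul_eq_mul]

theorem MvPolynomial.IsHomogeneous.sum_mul_eval_pderiv {σ R : Type*} [Fintype σ] [CommSemiring R]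
    {P : MvPolynomial σ R} {p : ℕ} (hP : P.IsHomogeneous p) (a : σ → R) :
    ∑ i, a i * eval a (pderiv i P) = p * eval a P := by
  simpa [map_sum] using congrArg (eval a) hP.sum_X_mul_pderiv

theorem Fin.neg_one_pow_val_rev {R : Type*} [Monoid R] [HasDistribNeg R] {k : ℕ}
    (i : Fin (k + 1)) : (-1 : R) ^ (i.rev : ℕ) = (-1) ^ k * (-1) ^ (i : ℕ) := by
  have hk : k + (i : ℕ) = (i.rev : ℕ) + 2 * i := by rw [Fin.val_rev]; omega
  rw [← pow_add, hk, pow_add, pow_mul, neg_one_sq, one_pow, mul_one]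

theorem MvPolynomial.hasDerivAt_eval_add_smul {σ : Type*} [Fintype σ] (P : MvPolynomial σ ℂ)
    (a b : σ → ℂ) :
    HasDerivAt (fun t : ℝ => eval (a + (t : ℂ) • b) P) (∑ i, b i * eval a (pderiv i P)) 0 := by
  induction P using MvPolynomial.induction_on with
  | C c => simpa using hasDerivAt_const (0 : ℝ) c
  | add P Q hP hQ =>
    simp only [map_add, mul_add, Finset.sum_add_distrib]
    exact hP.add hQ
  | mul_X P j hP =>
    classical
    have hline : HasDerivAt (fun t : ℝ => a j + (t : ℂ) * b j) (b j) 0 := by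
      simpa using ((hasDerivAt_id (0 : ℝ)).ofReal_comp.mul_const (b j)).const_add (a j)
    simp only [eval_mul, eval_X, Pi.add_apply, Pi.smul_apply, smul_eq_mul]
    refine (hP.mul hline).congr_deriv ?_
    simp only [pderiv_mul, pderiv_X, Pi.single_apply, mul_ite, mul_one, mul_zero, map_add,
      eval_mul, eval_X, apply_ite (eval a), map_zero, mul_add, Finset.sum_add_distrib]
    simp [Finset.sum_mul, mul_assoc, mul_comm (eval a P)]

def revVstarMatrix {N : ℕ} (v : Fin N → ℂ) (H : Fin N → Matrix (Fin N) (Fin N) ℂ) :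
    Matrix (Fin N) (Fin N) ℂ :=
  Matrix.of fun k l => vstarM v (H l) (Fin.rev k)

theorem vstarM_add_smul {N : ℕ} (v : Fin N → ℂ) (h H : Matrix (Fin N) (Fin N) ℂ) (c : ℂ) :
    vstarM v (h + c • H) = vstarM v h + c • vstarM v H := by
  ext i
  simp [vstarM, mul_add, Finset.sum_add_distrib, Finset.mul_sum, mul_left_comm]

theorem deriv_eval_vstarM_add_smul {N : ℕ} (P : MvPolynomial (Fin N) ℂ) (v : Fin N → ℂ)
    (h H : Matrix (Fin N) (Fin N) ℂ) :
    deriv (fun t : ℝ => eval (vstarM v (h + (t : ℂ) • H)) P) 0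
      = ∑ i, vstarM v H i * eval (vstarM v h) (pderiv i P) := by
  simp_rw [vstarM_add_smul]
  exact (hasDerivAt_eval_add_smul P _ _).deriv

theorem rev_vecMul_revVstarMatrix {N : ℕ} (v : Fin N → ℂ) (H : Fin N → Matrix (Fin N) (Fin N) ℂ)
    (x : Fin N → ℂ) (j : Fin N) :
    ((x ∘ Fin.rev) ᵥ* revVstarMatrix v H) j = ∑ i, vstarM v (H j) i * x i := by
  simp only [vecMul, dotProduct, revVstarMatrix, Matrix.of_apply, Function.comp_apply]
  rw [← Equiv.sum_comp Fin.revPerm]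
  simp [mul_comm]

theorem dpbar_eq_mul_det_revVstarMatrix {n : ℕ} (v : Fin (n + 2) → ℂ)
    (H : Fin (n + 2) → Matrix (Fin (n + 2)) (Fin (n + 2)) ℂ) :
    dpbar v H = (n + 2) * (2 * (-1) ^ ((n + 2) * (n + 1) / 2) * (-1) ^ (n + 1)) *
      (revVstarMatrix v H).det := by
  have hexp : (n + 4) * (n + 1) / 2 = (n + 2) * (n + 1) / 2 + (n + 1) := by
    rw [show (n + 4) * (n + 1) = (n + 2) * (n + 1) + (n + 1) * 2 by ring,
      Nat.add_mul_div_right _ _ two_pos]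
  rw [dpbar, hexp, pow_add, revVstarMatrix]
  ring

theorem neg_one_pow_mul_pbar_succAbove {n : ℕ} (v : Fin (n + 2) → ℂ)
    (h : Matrix (Fin (n + 2)) (Fin (n + 2)) ℂ)
    (H : Fin (n + 2) → Matrix (Fin (n + 2)) (Fin (n + 2)) ℂ) (j : Fin (n + 2)) :
    (-1) ^ (j : ℕ) * pbar v h (fun k => H (j.succAbove k)) = 2 * (-1) ^ ((n + 2) * (n + 1) / 2) *
      (-1) ^ (n + 1) * (adjugate (revVstarMatrix v H) *ᵥ (vstarM v h ∘ Fin.rev)) j := by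
  rw [pbar, mulVec, dotProduct, ← Equiv.sum_comp Fin.revPerm, Finset.mul_sum, Finset.mul_sum,
    Finset.mul_sum]
  refine Finset.sum_congr rfl fun m _ => ?_
  simp only [adjugate_fin_succ_eq_det_submatrix, Fin.revPerm_apply, Function.comp_apply,
    Fin.rev_rev, pow_add, Fin.neg_one_pow_val_rev]
  have hminor : (revVstarMatrix v H).submatrix m.succAbove j.succAbove =
      of fun k l => vstarM v (H (j.succAbove l)) (m.succAbove k).rev := rfl
  rw [hminor]
  ring

theorem dP_wedge_pbar_general {n : ℕ} (p : ℕ)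
    (P : MvPolynomial (Fin (n + 2)) ℂ) (hP : P.IsHomogeneous p)
    (v : Fin (n + 2) → ℂ)
    (h : Matrix (Fin (n + 2)) (Fin (n + 2)) ℂ)
    (H : Fin (n + 2) → Matrix (Fin (n + 2)) (Fin (n + 2)) ℂ) :
    ∑ j : Fin (n + 2), (-1 : ℂ) ^ (j : ℕ) *
        deriv (fun t : ℝ => MvPolynomial.eval (vstarM v (h + (t : ℂ) • H j)) P) 0 *
        pbar v h (fun k => H (j.succAbove k))
      = ((p : ℂ) / (n + 2)) * MvPolynomial.eval (vstarM v h) P * dpbar v H := by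
  set B := revVstarMatrix v H
  set e : Fin (n + 2) → ℂ := fun i => eval (vstarM v h) (pderiv i P)
  set s : ℂ := 2 * (-1) ^ ((n + 2) * (n + 1) / 2) * (-1) ^ (n + 1)
  have hN : (n : ℂ) + 2 ≠ 0 := by norm_cast
  calc _ = s * ((e ∘ Fin.rev) ᵥ* B ⬝ᵥ adjugate B *ᵥ (vstarM v h ∘ Fin.rev)) := by
        simp only [dotProduct, Finset.mul_sum]
        refine Finset.sum_congr rfl fun j _ => ?_
        rw [deriv_eval_vstarM_add_smul, mul_right_comm, neg_one_pow_mul_pbar_succAbove,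
          rev_vecMul_revVstarMatrix]
        ring
    _ = s * (B.det * (p * eval (vstarM v h) P)) := by
        have hrev : (e ∘ Fin.rev) ⬝ᵥ (vstarM v h ∘ Fin.rev) = e ⬝ᵥ vstarM v h :=
          comp_equiv_dotProduct_comp_equiv _ _ Fin.revPerm
        rw [vecMul_dotProduct_adjugate_mulVec, hrev, dotProduct_comm, dotProduct,
          hP.sum_mul_eval_pderiv]
    _ = _ := by
        rw [dpbar_eq_mul_det_revVstarMatrix]
        field_simp
        ring

/-- `dP(v*h) ∧ p̄(v) = p N⁻¹ P(v*h) dp̄(v)` : for `P` a homogeneous polynomial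
of degree `p` on row vectors, every `v`, Hermitian `h`, and Hermitian `H_0,…,H_{N−1}`,
`Σ_j (−1)^j ∂_t|_{t=0}[P(v*(h+tH_j))] · pbar(v,h)(H_0,…,Ĥ_j,…,H_{N−1})
  = (p/N) P(v*h) dpbar(v)(H_0,…,H_{N−1})`. -/
theorem dP_wedge_pbar {n : ℕ} (p : ℕ)
    (P : MvPolynomial (Fin (n + 2)) ℂ) (hP : P.IsHomogeneous p)
    (v : Fin (n + 2) → ℂ)
    (h : Matrix (Fin (n + 2)) (Fin (n + 2)) ℂ) (hh : h.IsHermitian)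
    (H : Fin (n + 2) → Matrix (Fin (n + 2)) (Fin (n + 2)) ℂ)
    (hH : ∀ j, (H j).IsHermitian) :
    ∑ j : Fin (n + 2), (-1 : ℂ) ^ (j : ℕ) *
        deriv (fun t : ℝ => MvPolynomial.eval (vstarM v (h + (t : ℂ) • H j)) P) 0 *
        pbar v h (fun k => H (j.succAbove k))
      = ((p : ℂ) / (n + 2)) * MvPolynomial.eval (vstarM v h) P * dpbar v H :=
  dP_wedge_pbar_general p P hP v h H
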